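/- Let f be holomorphic on the unbounded sector S_{d,δ} with values in a complex Banach space E, continuous at 0, satisfying ‖f(u)‖ ≤ C|u| exp(K|u|^k). Then the function u ↦ k u^k f(u) admits a Laplace transform of order k along direction d and L_k^d(k u^k f(u))(t) = t^{k+1} ∂_t (L_k^d(f)(t)) on the common domain. -/

import Mathlib

/-!
On the ray `r ↦ r e^{iγ}` the Laplace kernel has modulus `exp(-r^k ψ(t))`, where
`ψ(t) = Re((e^{iγ}/t)^k) = cos(k(γ - arg t)) / |t|^k` is `rayDecayRate`. The hypotheses on
`cos(k(γ - arg t))` and `|t|^k` give `ψ(t) > K`, so the kernel beats the growth of `f`. Since `ψ`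
is continuous, `ψ > B > K` near `t`, which gives an integrable majorant for the `t`-derivative of
the integrand, so we may differentiate under the integral sign. The derivative of
`exp(-(u/t)^k)` is `k u^k / t^{k+1}` times itself, which is the identity.
-/

open Complex Metric Set MeasureTheory

noncomputable section

def sect (d δ : ℝ) : Set ℂ := {u : ℂ | u ≠ 0 ∧ |u.arg - d| < δ}

def laplaceRay {E : Type*} [NormedAddCommGroup E] [NormedSpace ℂ E]
    (k : ℕ) (γ : ℝ) (f : ℂ → E) (t : ℂ) : E :=
  (k : ℝ) • ∫ r in Set.Ioi (0 : ℝ),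
    (Complex.exp (-(((r : ℂ) * Complex.exp (γ * Complex.I)) / t) ^ k) / (r : ℂ)) •
      f ((r : ℂ) * Complex.exp (γ * Complex.I))

open Filter Topology

def rayDecayRate (k : ℕ) (γ : ℝ) (x : ℂ) : ℝ := ((Complex.exp (γ * I) / x) ^ k).re

theorem rayDecayRate_eq (k : ℕ) (γ : ℝ) (t : ℂ) :
    rayDecayRate k γ t = Real.cos (k * (γ - t.arg)) / ‖t‖ ^ k := by
  have hpolar : (Complex.exp (γ * I) / t) ^ k
      = Complex.exp ((k * (γ - t.arg) : ℝ) * I) / ((‖t‖ ^ k : ℝ) : ℂ) := by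
    conv_lhs => rw [← Complex.norm_mul_exp_arg_mul_I t]
    rw [div_pow, mul_pow, ← Complex.exp_nat_mul, ← Complex.exp_nat_mul, div_mul_eq_div_div,
      div_right_comm, ← Complex.exp_sub]
    push_cast
    ring_nf
  rw [rayDecayRate, hpolar, Complex.div_ofReal_re, Complex.exp_ofReal_mul_I_re]

theorem Complex.hasDerivAt_exp_neg_div_pow (k : ℕ) (u : ℂ) {x : ℂ} (hx : x ≠ 0) :
    HasDerivAt (fun y => Complex.exp (-(u / y) ^ k))
      (Complex.exp (-(u / x) ^ k) * (k * u ^ k / x ^ (k + 1))) x := by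
  have hzpow : ∀ y : ℂ, -(u / y) ^ k = -u ^ k * y ^ (-(k : ℤ)) := fun y => by
    rw [div_pow, zpow_neg, zpow_natCast, div_eq_mul_inv, neg_mul]
  simp_rw [hzpow]
  refine (((hasDerivAt_zpow (-(k : ℤ)) x (Or.inl hx)).const_mul (-u ^ k)).cexp).congr_deriv ?_
  rw [show x ^ (-(k : ℤ) - 1) = (x ^ (k + 1))⁻¹ by rw [← zpow_natCast, ← zpow_neg]; push_cast; ring_nf]
  push_cast
  ring

theorem integrableOn_pow_mul_exp_neg_mul_pow (n : ℕ) {k : ℕ} (hk : 1 ≤ k) {b : ℝ} (hb : 0 < b) :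
    IntegrableOn (fun r : ℝ => r ^ n * Real.exp (-b * r ^ k)) (Ioi 0) := by
  simpa only [Real.rpow_natCast] using integrableOn_rpow_mul_exp_neg_mul_rpow (s := n) (p := k)
    (neg_one_lt_zero.trans_le n.cast_nonneg) (by exact_mod_cast hk) hb

theorem norm_ofReal_mul_exp_mul_I {r : ℝ} (hr : 0 ≤ r) (γ : ℝ) :
    ‖(r : ℂ) * Complex.exp (γ * I)‖ = r := by
  rw [norm_mul, Complex.norm_exp_ofReal_mul_I, Complex.norm_real, Real.norm_of_nonneg hr, mul_one]

theorem norm_exp_neg_ofReal_mul_div_pow (k : ℕ) (r : ℝ) (e x : ℂ) :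
    ‖Complex.exp (-((r : ℂ) * e / x) ^ k)‖ = Real.exp (-(r ^ k * ((e / x) ^ k).re)) := by
  rw [Complex.norm_exp, mul_div_assoc, mul_pow, ← Complex.ofReal_pow, Complex.neg_re,
    Complex.re_ofReal_mul]

section

variable {E : Type*} [NormedAddCommGroup E] [NormedSpace ℂ E]

def laplaceRayIntegrand (k : ℕ) (γ : ℝ) (f : ℂ → E) (x : ℂ) (r : ℝ) : E :=
  (Complex.exp (-(((r : ℂ) * Complex.exp (γ * I)) / x) ^ k) / (r : ℂ)) •
    f ((r : ℂ) * Complex.exp (γ * I))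

theorem continuousAt_rayDecayRate (k : ℕ) (γ : ℝ) {x : ℂ} (hx : x ≠ 0) :
    ContinuousAt (rayDecayRate k γ) x :=
  Complex.continuous_re.continuousAt.comp ((continuousAt_const.div continuousAt_id hx).pow k)

variable {k : ℕ} {γ C K : ℝ} {f : ℂ → E}

theorem continuousOn_laplaceRayIntegrand
    (hcont : ContinuousOn (fun r : ℝ => f (r * Complex.exp (γ * I))) (Ioi 0)) (x : ℂ) :
    ContinuousOn (laplaceRayIntegrand k γ f x) (Ioi 0) := by
  refine ContinuousOn.smul (ContinuousOn.div (Continuous.continuousOn ?_)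
    Complex.continuous_ofReal.continuousOn fun r hr => ?_) hcont
  · fun_prop
  · exact Complex.ofReal_ne_zero.mpr (ne_of_gt hr)

theorem norm_laplaceRayIntegrand_le {r : ℝ} (hr : 0 < r)
    (hbound : ‖f (r * Complex.exp (γ * I))‖ ≤ C * r * Real.exp (K * r ^ k))
    {x : ℂ} {B : ℝ} (hB : B ≤ rayDecayRate k γ x) :
    ‖laplaceRayIntegrand k γ f x r‖ ≤ C * Real.exp (-(B - K) * r ^ k) := by
  rw [laplaceRayIntegrand, norm_smul, norm_div, norm_exp_neg_ofReal_mul_div_pow, Complex.norm_real,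
    Real.norm_of_nonneg hr.le]
  calc Real.exp (-(r ^ k * rayDecayRate k γ x)) / r * ‖f (r * Complex.exp (γ * I))‖
      ≤ Real.exp (-(r ^ k * B)) / r * (C * r * Real.exp (K * r ^ k)) := by
        gcongr
    _ = C * Real.exp (-(B - K) * r ^ k) := by
        rw [show -(B - K) * r ^ k = -(r ^ k * B) + K * r ^ k by ring, Real.exp_add]
        field_simp

theorem hasDerivAt_laplaceRayIntegrand (r : ℝ) {x : ℂ} (hx : x ≠ 0) :
    HasDerivAt (laplaceRayIntegrand k γ f · r)
      ((k * (r * Complex.exp (γ * I)) ^ k / x ^ (k + 1)) • laplaceRayIntegrand k γ f x r) x := by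
  refine (((Complex.hasDerivAt_exp_neg_div_pow k _ hx).div_const (r : ℂ)).smul_const _).congr_deriv ?_
  rw [laplaceRayIntegrand, smul_smul]
  ring_nf

theorem norm_derivLaplaceRayIntegrand_le {r : ℝ} (hr : 0 < r)
    (hbound : ‖f (r * Complex.exp (γ * I))‖ ≤ C * r * Real.exp (K * r ^ k))
    {x : ℂ} {B m : ℝ} (hB : B ≤ rayDecayRate k γ x) (hm : 0 < m) (hmx : m ≤ ‖x‖) :
    ‖(k * (r * Complex.exp (γ * I)) ^ k / x ^ (k + 1)) • laplaceRayIntegrand k γ f x r‖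
      ≤ k * C / m ^ (k + 1) * (r ^ k * Real.exp (-(B - K) * r ^ k)) := by
  rw [norm_smul, norm_div, norm_mul, norm_pow, norm_pow, Complex.norm_natCast,
    norm_ofReal_mul_exp_mul_I hr.le]
  calc k * r ^ k / ‖x‖ ^ (k + 1) * ‖laplaceRayIntegrand k γ f x r‖
      ≤ k * r ^ k / m ^ (k + 1) * (C * Real.exp (-(B - K) * r ^ k)) := by
        gcongr
        exact norm_laplaceRayIntegrand_le hr hbound hB
    _ = k * C / m ^ (k + 1) * (r ^ k * Real.exp (-(B - K) * r ^ k)) := by ring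

theorem hasDerivAt_laplaceRay (hk : 1 ≤ k)
    (hcont : ContinuousOn (fun r : ℝ => f (r * Complex.exp (γ * I))) (Ioi 0))
    (hbound : ∀ r : ℝ, 0 < r → ‖f (r * Complex.exp (γ * I))‖ ≤ C * r * Real.exp (K * r ^ k))
    {t : ℂ} (ht : t ≠ 0) (hK : K < rayDecayRate k γ t) :
    HasDerivAt (laplaceRay k γ f)
      ((t ^ (k + 1))⁻¹ • laplaceRay k γ (fun u => ((k : ℂ) * u ^ k) • f u) t) t := by
  obtain ⟨B, hKB, hBt⟩ := exists_between hK
  set F' : ℂ → ℝ → E := fun x r =>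
    (k * (r * Complex.exp (γ * I)) ^ k / x ^ (k + 1)) • laplaceRayIntegrand k γ f x r
  set s : Set ℂ := {x | x ≠ 0 ∧ B < rayDecayRate k γ x ∧ ‖t‖ / 2 < ‖x‖}
  have hs : s ∈ 𝓝 t :=
    (eventually_ne_nhds ht).and <|
      (continuousAt_const.eventually_lt (continuousAt_rayDecayRate k γ ht) hBt).and <|
      continuousAt_const.eventually_lt continuous_norm.continuousAt
        (half_lt_self (norm_pos_iff.mpr ht))
  have hmeas : ∀ x, AEStronglyMeasurable (laplaceRayIntegrand k γ f x) (volume.restrict (Ioi 0)) :=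
    fun x => (continuousOn_laplaceRayIntegrand hcont x).aestronglyMeasurable measurableSet_Ioi
  have hmeas' : AEStronglyMeasurable (F' t) (volume.restrict (Ioi 0)) :=
    ((Continuous.continuousOn (by fun_prop)).smul (continuousOn_laplaceRayIntegrand hcont t)
      ).aestronglyMeasurable measurableSet_Ioi
  have hint : IntegrableOn (laplaceRayIntegrand k γ f t) (Ioi 0) := by
    refine Integrable.mono' (by simpa only [pow_zero, one_mul] using
      (integrableOn_pow_mul_exp_neg_mul_pow 0 hk (sub_pos.mpr hK)).const_mul C) (hmeas t) ?_
    exact (ae_restrict_iff' measurableSet_Ioi).2 <| ae_of_all _ fun r hr =>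
      norm_laplaceRayIntegrand_le hr (hbound r hr) le_rfl
  have hdom : ∀ᵐ r ∂(volume.restrict (Ioi 0)), ∀ x ∈ s,
      ‖F' x r‖ ≤ k * C / (‖t‖ / 2) ^ (k + 1) * (r ^ k * Real.exp (-(B - K) * r ^ k)) :=
    (ae_restrict_iff' measurableSet_Ioi).2 <| ae_of_all _ fun r hr x ⟨_, hBx, htx⟩ =>
      norm_derivLaplaceRayIntegrand_le hr (hbound r hr) hBx.le (half_pos (norm_pos_iff.mpr ht))
        htx.le
  have hderiv := hasDerivAt_integral_of_dominated_loc_of_deriv_le hs (Eventually.of_forall hmeas)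
    hint hmeas' hdom ((integrableOn_pow_mul_exp_neg_mul_pow k hk (sub_pos.mpr hKB)).const_mul _)
    (ae_of_all _ fun r x hx => hasDerivAt_laplaceRayIntegrand r hx.1)
  refine (hderiv.2.const_smul (k : ℝ)).congr_deriv ?_
  rw [laplaceRay, smul_comm (t ^ (k + 1))⁻¹, ← integral_smul (t ^ (k + 1))⁻¹]
  congr 1
  refine setIntegral_congr_fun measurableSet_Ioi fun r _ => ?_
  simp only [F', laplaceRayIntegrand, smul_smul]
  congr 1
  ring

end

theorem stmt8_laplace_of_kuk_f_general
    {E : Type*} [NormedAddCommGroup E] [NormedSpace ℂ E]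
    (k : ℕ) (hk : 1 ≤ k) (d δ C K δ1 : ℝ) (hK : 0 < K)
    (f : ℂ → E)
    (hcont : ContinuousOn f (sect d δ ∪ {0}))
    (hgrowth : ∀ u ∈ sect d δ,
      ‖f u‖ ≤ C * ‖u‖ * Real.exp (K * ‖u‖ ^ k))
    (γ : ℝ) (hray : ∀ r : ℝ, 0 < r → (r : ℂ) * Complex.exp (γ * Complex.I) ∈ sect d δ)
    (t : ℂ) (ht : t ≠ 0)
    (hcos : δ1 ≤ Real.cos (k * (γ - t.arg)))
    (hdom : ‖t‖ ^ k < δ1 / K) :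
    laplaceRay k γ (fun u => ((k : ℂ) * u ^ k) • f u) t =
      t ^ (k + 1) • deriv (laplaceRay k γ f) t := by
  have hdecay : K < rayDecayRate k γ t := by
    rw [rayDecayRate_eq, lt_div_iff₀ (pow_pos (norm_pos_iff.mpr ht) k)]
    linarith [(lt_div_iff₀ hK).mp hdom]
  have hcont_ray : ContinuousOn (fun r : ℝ => f (r * Complex.exp (γ * I))) (Ioi 0) :=
    hcont.comp (Continuous.continuousOn (by fun_prop)) fun r hr => Or.inl (hray r hr)
  have hgrowth_ray (r : ℝ) (hr : 0 < r) :
      ‖f (r * Complex.exp (γ * I))‖ ≤ C * r * Real.exp (K * r ^ k) := by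
    simpa only [norm_ofReal_mul_exp_mul_I hr.le] using hgrowth _ (hray r hr)
  rw [(hasDerivAt_laplaceRay hk hcont_ray hgrowth_ray ht hdecay).deriv,
    smul_inv_smul₀ (pow_ne_zero _ ht)]

/-- `L_k^d(k u^k f(u))(t) = t^{k+1} ∂_t (L_k^d f)(t)` on the common domain. -/
theorem stmt8_laplace_of_kuk_f
    {E : Type*} [NormedAddCommGroup E] [NormedSpace ℂ E] [CompleteSpace E]
    (k : ℕ) (hk : 1 ≤ k) (d δ C K δ1 : ℝ) (hδ : 0 < δ) (hC : 0 < C) (hK : 0 < K)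
    (hδ1 : 0 < δ1)
    (f : ℂ → E) (hf : DifferentiableOn ℂ f (sect d δ))
    (hcont : ContinuousOn f (sect d δ ∪ {0}))
    (hgrowth : ∀ u ∈ sect d δ,
      ‖f u‖ ≤ C * ‖u‖ * Real.exp (K * ‖u‖ ^ k))
    (γ : ℝ) (hray : ∀ r : ℝ, 0 < r → (r : ℂ) * Complex.exp (γ * Complex.I) ∈ sect d δ)
    (t : ℂ) (ht : t ≠ 0)
    (hcos : δ1 ≤ Real.cos (k * (γ - t.arg)))
    (hdom : ‖t‖ ^ k < δ1 / K) :
    laplaceRay k γ (fun u => ((k : ℂ) * u ^ k) • f u) t =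
      t ^ (k + 1) • deriv (laplaceRay k γ f) t :=
  stmt8_laplace_of_kuk_f_general k hk d δ C K δ1 hK f hcont hgrowth γ hray t ht hcos hdom
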